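/- arXiv:math/0501122 — 3 statements merged into one kernel-verified Lean document; each statement's English description precedes it below -/
import Mathlib

section
/- Let p and l be distinct odd primes. Two elements x, y ∈ Γ̃ commute in ℍ(ℤ) if and only if their images ψ(x), ψ(y) commute in PGL₂(ℚ_p) × PGL₂(ℚ_l). -/
open Quaternion Matrix
open scoped Classical

noncomputable section

/-- The set `Γ̃` of integer quaternions with norm `p^r l^s` and the appropriate
parity conditions. -/
def GammaTilde (p l : ℕ) : Set ℍ[ℤ] :=
  {x | (∃ r s : ℕ, Quaternion.normSq x = (p : ℤ) ^ r * (l : ℤ) ^ s) ∧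
       (Quaternion.normSq x % 4 = 1 →
          Odd x.re ∧ Even x.imI ∧ Even x.imJ ∧ Even x.imK) ∧
       (Quaternion.normSq x % 4 = 3 →
          Even x.imI ∧ Odd x.re ∧ Odd x.imJ ∧ Odd x.imK)}

/-- The set `Ã ⊆ Γ̃` of elements of positive real part and norm `p`. -/
def Atilde (p l : ℕ) : Set ℍ[ℤ] :=
  {x | x ∈ GammaTilde p l ∧ 0 < x.re ∧ Quaternion.normSq x = (p : ℤ)}

/-- The set `B̃ ⊆ Γ̃` of elements of positive real part and norm `l`. -/
def Btilde (p l : ℕ) : Set ℍ[ℤ] :=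
  {y | y ∈ GammaTilde p l ∧ 0 < y.re ∧ Quaternion.normSq y = (l : ℤ)}

/-- The projective general linear group `PGL₂(K)`: `GL₂(K)` modulo its center. -/
abbrev PGL2 (K : Type*) [Field K] : Type _ :=
  GL (Fin 2) K ⧸ Subgroup.center (GL (Fin 2) K)

/-- The matrix `M_{c,d}(x)` associated to an integer quaternion `x`. -/
def Mcd {K : Type*} [Field K] (c d : K) (x : ℍ[ℤ]) : Matrix (Fin 2) (Fin 2) K :=
  !![(x.re : K) + (x.imI : K) * c + (x.imK : K) * d,
     -(x.imI : K) * d + (x.imJ : K) + (x.imK : K) * c;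
     -(x.imI : K) * d - (x.imJ : K) + (x.imK : K) * c,
     (x.re : K) - (x.imI : K) * c - (x.imK : K) * d]

lemma det_Mcd {K : Type*} [Field K] {c d : K} (hcd : c ^ 2 + d ^ 2 + 1 = 0)
    (x : ℍ[ℤ]) : (Mcd c d x).det = ((Quaternion.normSq x : ℤ) : K) := by
  rw [Quaternion.normSq_def']
  rw [Mcd, Matrix.det_fin_two_of]
  push_cast
  linear_combination (-(x.imI : K) ^ 2 - (x.imK : K) ^ 2) * hcd

lemma det_Mcd_ne_zero {K : Type*} [Field K] [CharZero K] {c d : K}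
    (hcd : c ^ 2 + d ^ 2 + 1 = 0) {x : ℍ[ℤ]} (hx : x ≠ 0) :
    (Mcd c d x).det ≠ 0 := by
  rw [det_Mcd hcd]
  exact_mod_cast Quaternion.normSq_ne_zero.mpr hx

/-- The image of a nonzero integer quaternion in `GL₂(K)` (junk value `1` at `x = 0`). -/
def psiGL {K : Type*} [Field K] [CharZero K] (c d : K) (hcd : c ^ 2 + d ^ 2 + 1 = 0)
    (x : ℍ[ℤ]) : GL (Fin 2) K :=
  if hx : x = 0 then 1
  else Matrix.GeneralLinearGroup.mkOfDetNeZero (Mcd c d x) (det_Mcd_ne_zero hcd hx)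

variable (p l : ℕ) [Fact p.Prime] [Fact l.Prime]

/-- The map `ψ : ℍ(ℤ) → PGL₂(ℚ_p) × PGL₂(ℚ_l)` (with junk value at `0`). -/
def psi (cp dp : ℚ_[p]) (cl dl : ℚ_[l])
    (hp : cp ^ 2 + dp ^ 2 + 1 = 0) (hl : cl ^ 2 + dl ^ 2 + 1 = 0)
    (x : ℍ[ℤ]) : PGL2 ℚ_[p] × PGL2 ℚ_[l] :=
  (QuotientGroup.mk (psiGL cp dp hp x), QuotientGroup.mk (psiGL cl dl hl x))

/-- The group `Γ = ψ(Γ̃)`, as the subgroup of `PGL₂(ℚ_p) × PGL₂(ℚ_l)` generated by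
the image `ψ(Γ̃)` (this image is itself closed under multiplication and inverses,
so it coincides with the generated subgroup). -/
def Gamma (cp dp : ℚ_[p]) (cl dl : ℚ_[l])
    (hp : cp ^ 2 + dp ^ 2 + 1 = 0) (hl : cl ^ 2 + dl ^ 2 + 1 = 0) :
    Subgroup (PGL2 ℚ_[p] × PGL2 ℚ_[l]) :=
  Subgroup.closure (psi p l cp dp cl dl hp hl '' GammaTilde p l)

/-- The subgroup `Γ_p = ⟨ψ(Ã)⟩`. -/
def GammaP (cp dp : ℚ_[p]) (cl dl : ℚ_[l])
    (hp : cp ^ 2 + dp ^ 2 + 1 = 0) (hl : cl ^ 2 + dl ^ 2 + 1 = 0) :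
    Subgroup (PGL2 ℚ_[p] × PGL2 ℚ_[l]) :=
  Subgroup.closure (psi p l cp dp cl dl hp hl '' Atilde p l)

/-- The subgroup `Γ_l = ⟨ψ(B̃)⟩`. -/
def GammaL (cp dp : ℚ_[p]) (cl dl : ℚ_[l])
    (hp : cp ^ 2 + dp ^ 2 + 1 = 0) (hl : cl ^ 2 + dl ^ 2 + 1 = 0) :
    Subgroup (PGL2 ℚ_[p] × PGL2 ℚ_[l]) :=
  Subgroup.closure (psi p l cp dp cl dl hp hl '' Btilde p l)


section AuxLemmas


/-!
If `x` and `y` commute, so do their images, since `M_{c,d}` is multiplicative. Conversely, if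
`ψ(x)` and `ψ(y)` commute in `PGL₂(ℚ_p)`, then `M_{c,d}(yx) = a • M_{c,d}(xy)` for a scalar `a`;
comparing determinants gives `a² = 1`, and since `M_{c,d}` is injective, `yx = ± xy`. But
anticommuting nonzero quaternions have zero real part, whereas elements of `Γ̃` have odd norm
and hence, by the parity conditions, odd real part.
-/

namespace Quaternion

variable {R : Type*} [CommRing R] [LinearOrder R] [IsStrictOrderedRing R]

theorem re_eq_zero_of_mul_eq_neg_mul {x y : ℍ[R]} (hx : x ≠ 0) (h : x * y = -(y * x)) :
    y.re = 0 := by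
  have e0 := congrArg QuaternionAlgebra.re h
  have e1 := congrArg QuaternionAlgebra.imI h
  have e2 := congrArg QuaternionAlgebra.imJ h
  have e3 := congrArg QuaternionAlgebra.imK h
  simp only [re_mul, imI_mul, imJ_mul, imK_mul, re_neg, imI_neg, imJ_neg, imK_neg]
    at e0 e1 e2 e3
  have key : 2 * (y.re * normSq x) = 0 := by
    rw [normSq_def']
    linear_combination x.re * e0 + x.imI * e1 + x.imJ * e2 + x.imK * e3
  simpa [normSq_eq_zero, hx] using key

end Quaternion

theorem odd_re_of_mem_gammaTilde {p l : ℕ} (hp : Odd p) (hl : Odd l) {x : ℍ[ℤ]}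
    (hx : x ∈ GammaTilde p l) : Odd x.re := by
  obtain ⟨⟨r, s, hrs⟩, h1, h3⟩ := hx
  have hodd : Odd (normSq x) := by
    rw [hrs]
    exact ((Int.odd_coe_nat p).mpr hp).pow.mul ((Int.odd_coe_nat l).mpr hl).pow
  have hmod : normSq x % 4 = 1 ∨ normSq x % 4 = 3 := by
    have := Int.odd_iff.mp hodd
    omega
  rcases hmod with h | h
  · exact (h1 h).1
  · exact (h3 h).2.1

section Mcd

variable {K : Type*} [Field K] {c d : K}

theorem Mcd_mul (hcd : c ^ 2 + d ^ 2 + 1 = 0) (x y : ℍ[ℤ]) :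
    Mcd c d (x * y) = Mcd c d x * Mcd c d y := by
  ext i j
  fin_cases i <;> fin_cases j <;>
    · simp only [Mcd, Matrix.mul_apply, Fin.sum_univ_two, re_mul, imI_mul, imJ_mul, imK_mul,
        Int.cast_add, Int.cast_sub, Int.cast_mul, of_apply, cons_val', cons_val_zero,
        cons_val_one, cons_val_fin_one, Fin.zero_eta, Fin.mk_one, Fin.isValue]
      first
      | linear_combination (-(x.imI : K) * y.imI - (x.imK : K) * y.imK) * hcd
      | linear_combination ((x.imK : K) * y.imI - (x.imI : K) * y.imK) * hcd
      | linear_combination ((x.imI : K) * y.imK - (x.imK : K) * y.imI) * hcd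

theorem Mcd_neg (c d : K) (x : ℍ[ℤ]) : Mcd c d (-x) = -Mcd c d x := by
  ext i j
  fin_cases i <;> fin_cases j <;>
    · simp only [Mcd, re_neg, imI_neg, imJ_neg, imK_neg, Int.cast_neg, Matrix.neg_apply,
        of_apply, cons_val', cons_val_zero, cons_val_one, cons_val_fin_one, Fin.zero_eta,
        Fin.mk_one, Fin.isValue]
      ring

variable [CharZero K]

theorem Mcd_injective (hcd : c ^ 2 + d ^ 2 + 1 = 0) : Function.Injective (Mcd c d) := by
  intro x y h
  have e00 := congrFun (congrFun h 0) 0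
  have e01 := congrFun (congrFun h 0) 1
  have e10 := congrFun (congrFun h 1) 0
  have e11 := congrFun (congrFun h 1) 1
  simp only [Mcd, Matrix.of_apply, Matrix.cons_val', Matrix.cons_val_zero, Matrix.cons_val_one,
    Matrix.empty_val', Matrix.cons_val_fin_one] at e00 e01 e10 e11
  ext
  · exact_mod_cast (by linear_combination (e00 + e11) / 2 : (x.re : K) = y.re)
  · exact_mod_cast (by
      linear_combination ((x.imI : K) - y.imI) * hcd - c / 2 * e00 + c / 2 * e11
        + d / 2 * e01 + d / 2 * e10 : (x.imI : K) = y.imI)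
  · exact_mod_cast (by linear_combination (e01 - e10) / 2 : (x.imJ : K) = y.imJ)
  · exact_mod_cast (by
      linear_combination ((x.imK : K) - y.imK) * hcd - d / 2 * e00 + d / 2 * e11
        - c / 2 * e01 - c / 2 * e10 : (x.imK : K) = y.imK)

theorem psiGL_val (hcd : c ^ 2 + d ^ 2 + 1 = 0) {x : ℍ[ℤ]} (hx : x ≠ 0) :
    (psiGL c d hcd x : Matrix (Fin 2) (Fin 2) K) = Mcd c d x := by
  rw [psiGL, dif_neg hx]
  rfl

theorem psiGL_mul (hcd : c ^ 2 + d ^ 2 + 1 = 0) {x y : ℍ[ℤ]} (hx : x ≠ 0) (hy : y ≠ 0) :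
    psiGL c d hcd (x * y) = psiGL c d hcd x * psiGL c d hcd y := by
  ext : 1
  rw [Units.val_mul, psiGL_val hcd hx, psiGL_val hcd hy, psiGL_val hcd (mul_ne_zero hx hy),
    Mcd_mul hcd]

end Mcd

theorem Matrix.GeneralLinearGroup.exists_val_eq_smul_of_mk_eq {n K : Type*} [Fintype n]
    [DecidableEq n] [Field K] {g h : GL n K}
    (hgh : (g : GL n K ⧸ Subgroup.center (GL n K)) = h) : ∃ a : K, h.val = a • g.val := by
  obtain ⟨a, ha⟩ :=
    mem_center_iff_val_mem_range_scalar.mp (QuotientGroup.eq.mp hgh)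
  refine ⟨a, ?_⟩
  calc h.val = (g * (g⁻¹ * h)).val := by rw [mul_inv_cancel_left]
    _ = a • g.val := by
      rw [Units.val_mul, ← ha, Matrix.scalar_apply, ← Matrix.smul_one_eq_diagonal,
        Matrix.mul_smul, Matrix.mul_one]

theorem mul_comm_or_anticomm_of_mk_psiGL_commute {K : Type*} [Field K] [CharZero K]
    {c d : K} (hcd : c ^ 2 + d ^ 2 + 1 = 0) {x y : ℍ[ℤ]} (hx : x ≠ 0) (hy : y ≠ 0)
    (h : (psiGL c d hcd x : PGL2 K) * psiGL c d hcd y = psiGL c d hcd y * psiGL c d hcd x) :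
    y * x = x * y ∨ y * x = -(x * y) := by
  rw [← QuotientGroup.mk_mul, ← QuotientGroup.mk_mul] at h
  obtain ⟨a, ha⟩ := Matrix.GeneralLinearGroup.exists_val_eq_smul_of_mk_eq h
  have hM : Mcd c d (y * x) = a • Mcd c d (x * y) := by
    rwa [← psiGL_mul hcd hy hx, ← psiGL_mul hcd hx hy, psiGL_val hcd (mul_ne_zero hy hx),
      psiGL_val hcd (mul_ne_zero hx hy)] at ha
  have hnorm : ((normSq (x * y) : ℤ) : K) ≠ 0 := by
    exact_mod_cast normSq_ne_zero.mpr (mul_ne_zero hx hy)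
  have ha2 : a ^ 2 = 1 := by
    have hdet := congrArg Matrix.det hM
    rw [Matrix.det_smul, det_Mcd hcd, det_Mcd hcd, Fintype.card_fin, map_mul normSq y,
      mul_comm, ← map_mul] at hdet
    exact (mul_eq_right₀ hnorm).mp hdet.symm
  rcases sq_eq_one_iff.mp ha2 with rfl | rfl
  · rw [one_smul] at hM
    exact Or.inl (Mcd_injective hcd hM)
  · rw [neg_one_smul, ← Mcd_neg] at hM
    exact Or.inr (Mcd_injective hcd hM)

theorem commute_iff_psi_commute_general (p l : ℕ) [Fact p.Prime] [Fact l.Prime]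
    (hp2 : p ≠ 2) (hl2 : l ≠ 2)
    (cp dp : ℚ_[p]) (cl dl : ℚ_[l])
    (hcp : cp ^ 2 + dp ^ 2 + 1 = 0) (hcl : cl ^ 2 + dl ^ 2 + 1 = 0)
    (x y : ℍ[ℤ]) (hx : x ∈ GammaTilde p l) (hy : y ∈ GammaTilde p l) :
    x * y = y * x ↔
      psi p l cp dp cl dl hcp hcl x * psi p l cp dp cl dl hcp hcl y =
        psi p l cp dp cl dl hcp hcl y * psi p l cp dp cl dl hcp hcl x := by
  have hp : Odd p := (Fact.out : p.Prime).odd_of_ne_two hp2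
  have hl : Odd l := (Fact.out : l.Prime).odd_of_ne_two hl2
  have hxre := odd_re_of_mem_gammaTilde hp hl hx
  have hyre := odd_re_of_mem_gammaTilde hp hl hy
  have hx0 : x ≠ 0 := by rintro rfl; simp at hxre
  have hy0 : y ≠ 0 := by rintro rfl; simp at hyre
  constructor
  · intro h
    simp only [psi, Prod.mk_mul_mk, ← QuotientGroup.mk_mul, ← psiGL_mul hcp, ← psiGL_mul hcl,
      hx0, hy0, h, ne_eq, not_false_eq_true]
  · intro h
    rcases mul_comm_or_anticomm_of_mk_psiGL_commute hcp hx0 hy0 (congrArg Prod.fst h)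
      with hyx | hyx
    · exact hyx.symm
    · have := Quaternion.re_eq_zero_of_mul_eq_neg_mul hy0 hyx
      simp [this] at hxre

/-- Lemma 2: elements `x, y ∈ Γ̃` commute in `ℍ(ℤ)` if and only if their images
`ψ(x), ψ(y)` commute in `PGL₂(ℚ_p) × PGL₂(ℚ_l)`. -/
theorem commute_iff_psi_commute (p l : ℕ) [Fact p.Prime] [Fact l.Prime]
    (hp2 : p ≠ 2) (hl2 : l ≠ 2) (hpl : p ≠ l)
    (cp dp : ℚ_[p]) (cl dl : ℚ_[l])
    (hcp : cp ^ 2 + dp ^ 2 + 1 = 0) (hcl : cl ^ 2 + dl ^ 2 + 1 = 0)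
    (x y : ℍ[ℤ]) (hx : x ∈ GammaTilde p l) (hy : y ∈ GammaTilde p l) :
    x * y = y * x ↔
      psi p l cp dp cl dl hcp hcl x * psi p l cp dp cl dl hcp hcl y =
        psi p l cp dp cl dl hcp hcl y * psi p l cp dp cl dl hcp hcl x :=
  commute_iff_psi_commute_general p l hp2 hl2 cp dp cl dl hcp hcl x y hx hy
end AuxLemmas
end
end

section
/- Let x, y ∈ ℍ(ℚ) each have nonzero imaginary part, and suppose the real part y₀ of y is nonzero. Then yxy⁻¹ commutes with x if and only if y commutes with x. -/
open Quaternion Matrix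

/-!
Two quaternions commute iff the cross product `v × u` of their imaginary parts vanishes. Put
`z = y x y*`, a positive multiple of `y x y⁻¹`. The imaginary part of `z x - x z` has inner
product `-4 y₀ |v × u|²` with the imaginary part `v` of `y`, where `u` is that of `x`; so if `z`
commutes with `x` and `y₀ ≠ 0`, then `v × u = 0`, i.e. `y` commutes with `x`.
-/

namespace Quaternion

variable {R : Type*}

def imVec [CommRing R] (a : ℍ[R]) : Fin 3 → R := ![a.imI, a.imJ, a.imK]

theorem commute_iff_imVec_cross_eq_zero [CommRing R] [NoZeroDivisors R] [CharZero R]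
    {a b : ℍ[R]} : Commute a b ↔ imVec a ⨯₃ imVec b = 0 := by
  have h2 : (2 : R) ≠ 0 := two_ne_zero
  simp only [Commute, SemiconjBy, Quaternion.ext_iff, re_mul, imI_mul, imJ_mul, imK_mul, imVec,
    cross_apply, cons_eq_zero_iff, zero_empty, and_true, cons_val_zero, cons_val_one,
    cons_val_two, head_cons, tail_cons]
  constructor
  · rintro ⟨-, hi, hj, hk⟩
    refine ⟨?_, ?_, ?_⟩ <;> apply mul_left_cancel₀ h2
    · linear_combination hi
    · linear_combination hj
    · linear_combination hk
  · rintro ⟨hi, hj, hk⟩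
    refine ⟨by ring, ?_, ?_, ?_⟩
    · linear_combination 2 * hi
    · linear_combination 2 * hj
    · linear_combination 2 * hk

theorem imVec_dotProduct_imVec_commutator_conj [CommRing R] (x y : ℍ[R]) :
    imVec y ⬝ᵥ imVec (y * x * star y * x - x * (y * x * star y)) =
      -4 * y.re * ((imVec y ⨯₃ imVec x) ⬝ᵥ (imVec y ⨯₃ imVec x)) := by
  simp only [imVec, cross_apply, dotProduct, Fin.sum_univ_three, cons_val_zero, cons_val_one,
    cons_val_two, head_cons, tail_cons, imI_sub, imJ_sub, imK_sub, re_mul, imI_mul, imJ_mul,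
    imK_mul, re_star, imI_star, imJ_star, imK_star]
  ring

variable [Field R] [LinearOrder R] [IsStrictOrderedRing R]

theorem commute_of_commute_mul_mul_star {x y : ℍ[R]} (hy : y.re ≠ 0)
    (h : Commute (y * x * star y) x) : Commute y x := by
  have hdot := imVec_dotProduct_imVec_commutator_conj x y
  rw [h.eq, sub_self] at hdot
  have hcross : (imVec y ⨯₃ imVec x) ⬝ᵥ (imVec y ⨯₃ imVec x) = 0 := by
    simpa [imVec, hy] using hdot.symm
  exact commute_iff_imVec_cross_eq_zero.2 (dotProduct_self_eq_zero.1 hcross)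

theorem commute_mul_mul_inv_iff {x y : ℍ[R]} (hy : y.re ≠ 0) :
    Commute (y * x * y⁻¹) x ↔ Commute y x := by
  have hy' : y ≠ 0 := by rintro rfl; exact hy rfl
  refine ⟨fun h ↦ commute_of_commute_mul_mul_star hy ?_, fun h ↦ ?_⟩
  · have hstar : y * x * star y = normSq y • (y * x * y⁻¹) := by
      rw [inv_def, mul_smul_comm, smul_smul, mul_inv_cancel₀ (normSq_ne_zero.2 hy'), one_smul]
    rw [hstar]
    exact h.smul_left _
  · rw [h.eq, mul_inv_cancel_right₀ hy']

end Quaternion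

theorem conj_commute_iff_general (x y : ℍ[ℚ])
    (hy0 : y.re ≠ 0) :
    (y * x * y⁻¹) * x = x * (y * x * y⁻¹) ↔ y * x = x * y :=
  commute_mul_mul_inv_iff hy0

/-- Lemma 4(a): if `x, y ∈ ℍ(ℚ)` have nonzero imaginary parts and `y` has nonzero
real part, then `yxy⁻¹` commutes with `x` if and only if `y` commutes with `x`. -/
theorem conj_commute_iff (x y : ℍ[ℚ])
    (hx : ¬ (x.imI = 0 ∧ x.imJ = 0 ∧ x.imK = 0))
    (hy : ¬ (y.imI = 0 ∧ y.imJ = 0 ∧ y.imK = 0))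
    (hy0 : y.re ≠ 0) :
    (y * x * y⁻¹) * x = x * (y * x * y⁻¹) ↔ y * x = x * y :=
  conj_commute_iff_general x y hy0
end

section
/- Let p be an odd prime and let x = x₀ + z₀(c₁ i + c₂ j + c₃ k) ∈ ℍ(ℤ) with gcd(c₁, c₂, c₃) = 1, z₀ ≠ 0, gcd(x₀, z₀) = 1, and |x|² = pʳ for some integer r ≥ 1. Set n = c₁² + c₂² + c₃². Then p does not divide n if and only if p does not divide all four integer coordinates of the quaternion x² (equivalently, x² is not divisible by p in ℍ(ℤ)). -/
open Quaternion

/-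
Write `n = c₁² + c₂² + c₃²`. Every quaternion satisfies `x² = 2 Re(x) x - |x|²`, and here
`|x|² = x₀² + z₀² n` is divisible by `p`. Modulo `p` the coordinates of `x²` are therefore
`2x₀²` and `2x₀ z₀ cᵢ`, so, `p` being odd, they all vanish exactly when `p ∣ x₀`. Finally
`p ∣ x₀² + z₀² n` with `x₀, z₀` coprime gives `p ∣ x₀ ↔ p ∣ n`.
-/

namespace Quaternion

variable {R : Type*} [CommRing R] (x : ℍ[R])

theorem re_sq : (x ^ 2).re = 2 * x.re ^ 2 - normSq x := by
  simp only [sq, re_mul, normSq_def']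
  ring

theorem imI_sq : (x ^ 2).imI = 2 * x.re * x.imI := by
  simp only [sq, imI_mul]
  ring

theorem imJ_sq : (x ^ 2).imJ = 2 * x.re * x.imJ := by
  simp only [sq, imJ_mul]
  ring

theorem imK_sq : (x ^ 2).imK = 2 * x.re * x.imK := by
  simp only [sq, imK_mul]
  ring

theorem dvd_coords_sq_iff_dvd_re {p : R} (hp : Prime p) (hp2 : ¬p ∣ 2) (hN : p ∣ normSq x) :
    (p ∣ (x ^ 2).re ∧ p ∣ (x ^ 2).imI ∧ p ∣ (x ^ 2).imJ ∧ p ∣ (x ^ 2).imK) ↔ p ∣ x.re := by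
  rw [re_sq, imI_sq, imJ_sq, imK_sq]
  constructor
  · rintro ⟨hre, -⟩
    have h2re : p ∣ 2 * x.re ^ 2 := by simpa using dvd_add hre hN
    exact hp.dvd_of_dvd_pow ((hp.dvd_or_dvd h2re).resolve_left hp2)
  · intro hre
    have h2re : p ∣ 2 * x.re := dvd_mul_of_dvd_right hre 2
    exact ⟨dvd_sub (dvd_mul_of_dvd_right (dvd_pow hre two_ne_zero) 2) hN,
      dvd_mul_of_dvd_left h2re _, dvd_mul_of_dvd_left h2re _, dvd_mul_of_dvd_left h2re _⟩

end Quaternion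

theorem Prime.dvd_iff_dvd_of_dvd_sq_add_sq_mul {R : Type*} [CommRing R] {p a b n : R}
    (hp : Prime p) (hab : IsCoprime a b) (h : p ∣ a ^ 2 + b ^ 2 * n) : p ∣ a ↔ p ∣ n := by
  constructor
  · intro ha
    have hbn : p ∣ b ^ 2 * n := (dvd_add_right (dvd_pow ha two_ne_zero)).mp h
    refine (hp.dvd_or_dvd hbn).resolve_left fun hb ↦ hp.not_isUnit ?_
    exact hab.isUnit_of_dvd' ha (hp.dvd_of_dvd_pow hb)
  · intro hn
    exact hp.dvd_of_dvd_pow ((dvd_add_left (dvd_mul_of_dvd_right hn _)).mp h)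

theorem not_dvd_iff_sq_not_dvd_general (p : ℕ) (hp : p.Prime) (hp2 : p ≠ 2)
    (x₀ z₀ c₁ c₂ c₃ : ℤ) (hxz : Int.gcd x₀ z₀ = 1)
    (x : ℍ[ℤ]) (hxdef : x = ⟨x₀, z₀ * c₁, z₀ * c₂, z₀ * c₃⟩)
    (r : ℕ) (hr : 1 ≤ r) (hnorm : Quaternion.normSq x = (p : ℤ) ^ r) :
    ¬ (p : ℤ) ∣ (c₁ ^ 2 + c₂ ^ 2 + c₃ ^ 2) ↔
      ¬ ((p : ℤ) ∣ (x ^ 2).re ∧ (p : ℤ) ∣ (x ^ 2).imI ∧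
         (p : ℤ) ∣ (x ^ 2).imJ ∧ (p : ℤ) ∣ (x ^ 2).imK) := by
  have hP : Prime (p : ℤ) := Nat.prime_iff_prime_int.mp hp
  have hP2 : ¬(p : ℤ) ∣ 2 := fun h ↦
    hp2 ((Nat.prime_dvd_prime_iff_eq hp Nat.prime_two).mp (by exact_mod_cast h))
  have hN : (p : ℤ) ∣ normSq x := hnorm ▸ dvd_pow_self _ (by omega)
  have hre : x.re = x₀ := by rw [hxdef]
  have hN' : normSq x = x₀ ^ 2 + z₀ ^ 2 * (c₁ ^ 2 + c₂ ^ 2 + c₃ ^ 2) := by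
    have hI : x.imI = z₀ * c₁ := by rw [hxdef]
    have hJ : x.imJ = z₀ * c₂ := by rw [hxdef]
    have hK : x.imK = z₀ * c₃ := by rw [hxdef]
    rw [normSq_def', hre, hI, hJ, hK]
    ring
  rw [not_iff_not, x.dvd_coords_sq_iff_dvd_re hP hP2 hN, hre]
  exact (hP.dvd_iff_dvd_of_dvd_sq_add_sq_mul (Int.isCoprime_iff_gcd_eq_one.mpr hxz)
    (hN' ▸ hN)).symm

/-- Lemma 5, (a) ⇔ (b): with `x = x₀ + z₀(c₁ i + c₂ j + c₃ k)`, `gcd(c₁,c₂,c₃) = 1`,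
`z₀ ≠ 0`, `gcd(x₀,z₀) = 1` and `|x|² = pʳ` (`r ≥ 1`), the prime `p` does not divide
`n = c₁² + c₂² + c₃²` if and only if `p` does not divide all four coordinates of `x²`. -/
theorem not_dvd_iff_sq_not_dvd (p : ℕ) (hp : p.Prime) (hp2 : p ≠ 2)
    (x₀ z₀ c₁ c₂ c₃ : ℤ) (hgcd : Int.gcd c₁ (Int.gcd c₂ c₃) = 1)
    (hz : z₀ ≠ 0) (hxz : Int.gcd x₀ z₀ = 1)
    (x : ℍ[ℤ]) (hxdef : x = ⟨x₀, z₀ * c₁, z₀ * c₂, z₀ * c₃⟩)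
    (r : ℕ) (hr : 1 ≤ r) (hnorm : Quaternion.normSq x = (p : ℤ) ^ r) :
    ¬ (p : ℤ) ∣ (c₁ ^ 2 + c₂ ^ 2 + c₃ ^ 2) ↔
      ¬ ((p : ℤ) ∣ (x ^ 2).re ∧ (p : ℤ) ∣ (x ^ 2).imI ∧
         (p : ℤ) ∣ (x ^ 2).imJ ∧ (p : ℤ) ∣ (x ^ 2).imK) :=
  not_dvd_iff_sq_not_dvd_general p hp hp2 x₀ z₀ c₁ c₂ c₃ hxz x hxdef r hr hnorm
end
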